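/- If α ≥ 1 + √3, then φ''(2) ≤ 0 for the Morse potential with r₀ = 1 + (1/α)·log((1+2e^{-α})/(1+2e^{-2α})). -/

import Mathlib

/-!
Writing `E = exp (-α (r - r₀))`, one has `φ''(r) = 2α²E(2E - 1)`, so `φ''(2) ≤ 0` iff
`2E ≤ 1`. At `r = 2` the choice of `r₀` gives `E = t(1 + 2t)/(1 + 2t²)` with `t = e^{-α}`,
and `2E ≤ 1` becomes `2t² + 2t ≤ 1`, i.e. `t ≤ (√3 - 1)/2 = 1/(1 + √3)`. This holds as soon
as `e^α ≥ 1 + √3`, in particular when `α ≥ 1 + √3`, since `e^α ≥ 1 + α`.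
-/

/-- Equilibrium distance parameter of the Morse potential. -/
noncomputable def morseR0 (α : ℝ) : ℝ :=
  1 + (1 / α) * Real.log ((1 + 2 * Real.exp (-α)) / (1 + 2 * Real.exp (-2 * α)))

/-- The (shifted) Morse potential with stiffness α and shift φ₀. -/
noncomputable def morse (α φ₀ : ℝ) (r : ℝ) : ℝ :=
  Real.exp (-2 * α * (r - morseR0 α)) - 2 * Real.exp (-α * (r - morseR0 α)) - φ₀

open Real

lemma exp_neg_mul_sub_morseR0 {α : ℝ} (hα : α ≠ 0) (r : ℝ) :
    exp (-α * (r - morseR0 α)) =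
      exp (-α * (r - 1)) * ((1 + 2 * exp (-α)) / (1 + 2 * exp (-2 * α))) := by
  have hlog : -α * (r - morseR0 α) =
      -α * (r - 1) + log ((1 + 2 * exp (-α)) / (1 + 2 * exp (-2 * α))) := by
    unfold morseR0
    field_simp
    ring
  rw [hlog, exp_add, exp_log (by positivity)]

lemma hasDerivAt_exp_mul_sub (a c r : ℝ) :
    HasDerivAt (fun r => exp (a * (r - c))) (a * exp (a * (r - c))) r := by
  simpa [mul_comm] using (((hasDerivAt_id r).sub_const c).const_mul a).exp

lemma hasDerivAt_morse (α φ₀ r : ℝ) :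
    HasDerivAt (morse α φ₀)
      (-2 * α * exp (-2 * α * (r - morseR0 α)) + 2 * α * exp (-α * (r - morseR0 α))) r :=
  (((hasDerivAt_exp_mul_sub (-2 * α) (morseR0 α) r).sub
    ((hasDerivAt_exp_mul_sub (-α) (morseR0 α) r).const_mul 2)).sub_const φ₀).congr_deriv
      (by ring)

lemma deriv_deriv_morse (α φ₀ r : ℝ) :
    deriv (deriv (morse α φ₀)) r =
      4 * α ^ 2 * exp (-2 * α * (r - morseR0 α))
        - 2 * α ^ 2 * exp (-α * (r - morseR0 α)) := by
  rw [funext fun r => (hasDerivAt_morse α φ₀ r).deriv]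
  exact ((((hasDerivAt_exp_mul_sub (-2 * α) (morseR0 α) r).const_mul (-2 * α)).add
    ((hasDerivAt_exp_mul_sub (-α) (morseR0 α) r).const_mul (2 * α))).congr_deriv
      (by ring)).deriv

lemma deriv_deriv_morse_nonpos_iff {α : ℝ} (hα : α ≠ 0) (φ₀ r : ℝ) :
    deriv (deriv (morse α φ₀)) r ≤ 0 ↔ 2 * exp (-α * (r - morseR0 α)) ≤ 1 := by
  set E := exp (-α * (r - morseR0 α))
  have hsq : exp (-2 * α * (r - morseR0 α)) = E ^ 2 := by
    rw [← exp_nat_mul]; ring_nf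
  have hpos : 0 < 2 * α ^ 2 * E := by positivity
  have hfactor : 4 * α ^ 2 * E ^ 2 - 2 * α ^ 2 * E = 2 * α ^ 2 * E * (2 * E - 1) := by ring
  rw [deriv_deriv_morse, hsq, hfactor, ← sub_nonpos (b := 1)]
  exact ⟨fun h => nonpos_of_mul_nonpos_right h hpos,
    fun h => mul_nonpos_of_nonneg_of_nonpos hpos.le h⟩

lemma two_mul_exp_neg_mul_two_sub_morseR0_le_one {α : ℝ} (hα : 1 + √3 ≤ exp α) :
    2 * exp (-α * (2 - morseR0 α)) ≤ 1 := by
  have hsqrt : √3 ^ 2 = 3 := sq_sqrt (by norm_num)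
  have hα0 : α ≠ 0 :=
    (one_lt_exp_iff.1 (by linarith [sqrt_pos.2 (by norm_num : (0 : ℝ) < 3)])).ne'
  set t := exp (-α) with ht
  have htpos : 0 < t := exp_pos _
  -- `(√3 - 1) / 2 = 1 / (1 + √3)` is the positive root of `2t² + 2t - 1`.
  have hroot : t ≤ (√3 - 1) / 2 := by
    have hinv : (1 + √3)⁻¹ = (√3 - 1) / 2 := by
      apply inv_eq_of_mul_eq_one_right
      linear_combination hsqrt / 2
    rw [ht, exp_neg, ← hinv]
    exact inv_anti₀ (by positivity) hα
  have h2α : exp (-2 * α) = t ^ 2 := by rw [ht, ← exp_nat_mul]; ring_nf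
  rw [exp_neg_mul_sub_morseR0 hα0, h2α, show -α * (2 - 1) = -α by ring, ← ht, mul_div_assoc',
    mul_div_assoc', div_le_one (by positivity)]
  nlinarith [mul_nonneg (sub_nonneg.2 hroot) (by positivity : (0 : ℝ) ≤ t + (√3 + 1) / 2)]

/-- if α ≥ 1 + √3 then φ''(2) ≤ 0. -/
theorem stmt_18 (α φ₀ : ℝ) (hα : 1 + Real.sqrt 3 ≤ α) :
    deriv (deriv (morse α φ₀)) 2 ≤ 0 := by
  have hexp : 1 + √3 ≤ exp α := by linarith [add_one_le_exp α]
  have hα0 : α ≠ 0 := (by linarith [sqrt_nonneg 3] : 0 < α).ne'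
  exact (deriv_deriv_morse_nonpos_iff hα0 φ₀ 2).2
    (two_mul_exp_neg_mul_two_sub_morseR0_le_one hexp)
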